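/- arXiv:1806.05126 — 2 statements merged into one kernel-verified Lean document; each statement's English description precedes it below -/
import Mathlib

section
/- Let M = (S, A, X, T, i) be a parametric MDP with induced POMDP M'. The function f : Runs_X → Runs' defined by f(x, s0·a0·s1·⋯) = (s0,x)·a0·(s1,x)·⋯ is an isomorphism of measurable spaces between (Runs_X, Cones_X) and (Runs', Cones'): f is a bijection and both f and f⁻¹ are measurable. -/
open MeasureTheory ENNReal

namespace PMDPEncoding

universe u v w

variable {S : Type u} {A : Type v} {X : Type w}

/-- An infinite alternating sequence of state-action pairs
(the `k`-th pair consists of the `k`-th state and the `k`-th action of the run). -/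
abbrev RunSeq (S : Type u) (A : Type v) := ℕ → S × A

/-- `ρ` is a run of the MDP with transition function `T`:
all transitions have positive probability. -/
def IsRun (T : S → A → PMF S) (ρ : RunSeq S A) : Prop :=
  ∀ k, 0 < T (ρ k).1 (ρ k).2 (ρ (k + 1)).1

/-- A history: a finite list of state-action pairs followed by a final state. -/
abbrev Hist (S : Type u) (A : Type v) := List (S × A) × S

/-- The first state of a history. -/
def Hist.first (h : Hist S A) : S :=
  match h.1 with
  | [] => h.2
  | p :: _ => p.1

/-- Auxiliary for `IsHist`: validity of the list part of a history with final state `t`. -/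
def IsHistL (T : S → A → PMF S) : List (S × A) → S → Prop
  | [], _ => True
  | (s, a) :: rest, t => 0 < T s a (Hist.first (rest, t)) ∧ IsHistL T rest t

/-- `h` is a history (finite prefix of a run) of the MDP with transition function `T`. -/
def IsHist (T : S → A → PMF S) (h : Hist S A) : Prop := IsHistL T h.1 h.2

/-- The set of runs of the MDP with transition function `T`. -/
def Runs (T : S → A → PMF S) := {ρ : RunSeq S A // IsRun T ρ}

/-- The set of (raw) sequences having the history `h` as a prefix. -/
def ConeSeq (h : Hist S A) : Set (RunSeq S A) :=
  {ρ | (∀ k, (hk : k < h.1.length) → ρ k = h.1[k]'hk) ∧ (ρ h.1.length).1 = h.2}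

/-- The cone of a history: the set of runs with prefix `h`. -/
def Cone (T : S → A → PMF S) (h : Hist S A) : Set (Runs T) :=
  {ρ | ρ.1 ∈ ConeSeq h}

/-- The σ-algebra on runs generated by the cones of histories. -/
instance conesAlg (T : S → A → PMF S) : MeasurableSpace (Runs T) :=
  MeasurableSpace.generateFrom {C | ∃ h : Hist S A, IsHist T h ∧ C = Cone T h}

/-- Valid histories of an MDP, as a subtype. -/
def HistOf (T : S → A → PMF S) := {h : Hist S A // IsHist T h}

/-- Auxiliary function for the probability of a cone:
`pre` is the prefix of the history processed so far. -/
noncomputable def coneProbAux (T : S → A → PMF S) (π : Hist S A → PMF A) :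
    List (S × A) → List (S × A) → S → ℝ≥0∞
  | _, [], _ => 1
  | pre, (s, a) :: rest, t =>
      π (pre, s) a * T s a (Hist.first (rest, t)) *
        coneProbAux T π (pre ++ [(s, a)]) rest t

/-- The probability `i(s₀) · ∏_{k<n} π(s₀a₀…s_k)(a_k) · T(s_k,a_k)(s_{k+1})` that the
induced measure of policy `π` and initial distribution `i` assigns to the cone of a history. -/
noncomputable def coneProb (T : S → A → PMF S) (i : PMF S) (π : Hist S A → PMF A)
    (h : Hist S A) : ℝ≥0∞ :=
  i h.first * coneProbAux T π [] h.1 h.2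

/-- The evaluated transition function `T_x` of a pMDP at parameter point `x`. -/
def evalT (T : S → A → X → PMF S) (x : X) : S → A → PMF S := fun s a => T s a x

/-- Runs of a pMDP: pairs `(x, ρ)` of a parameter value `x` and a run `ρ` of `M(x)`. -/
def RunsX (T : S → A → X → PMF S) := {q : X × RunSeq S A // IsRun (evalT T q.1) q.2}

/-- Valid histories of a pMDP: pairs `(x, h)` with `h` a history of `M(x)`. -/
def HistX (T : S → A → X → PMF S) := {q : X × Hist S A // IsHist (evalT T q.1) q.2}

/-- The generator set `{x} × Cone(h)` of the σ-algebra on the runs of a pMDP. -/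
def ConeX (T : S → A → X → PMF S) (x : X) (h : Hist S A) : Set (RunsX T) :=
  {q | q.1.1 = x ∧ q.1.2 ∈ ConeSeq h}

/-- The σ-algebra on the runs of a pMDP generated by the sets `{x} × Cone(h)`. -/
instance conesXAlg (T : S → A → X → PMF S) : MeasurableSpace (RunsX T) :=
  MeasurableSpace.generateFrom
    {C | ∃ (x : X) (h : Hist S A), IsHist (evalT T x) h ∧ C = ConeX T x h}

/-- The transition function `T'` of the induced POMDP of a pMDP:
`T'((s,x),a)(s',x') = T(s,a)(x)(s') · δ_x(x')`. -/
noncomputable def indT (T : S → A → X → PMF S) : S × X → A → PMF (S × X) :=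
  fun sx a => (T sx.1 a sx.2).map fun s' => (s', sx.2)

/-- The observation function of the induced POMDP: `O(s,x) = s`. -/
def obs : S × X → S := Prod.fst

/-- The observation map extended to histories of the induced POMDP. -/
def obsHist : Hist (S × X) A → Hist S A :=
  fun h => (h.1.map fun p => (p.1.1, p.2), h.2.1)

/-- The map `f` on raw sequences: `f(x, s₀·a₀·s₁·⋯) = (s₀,x)·a₀·(s₁,x)·⋯`. -/
def fSeq (x : X) (ρ : RunSeq S A) : RunSeq (S × X) A :=
  fun k => (((ρ k).1, x), (ρ k).2)

theorem indT_pos {T : S → A → X → PMF S} {s s' : S} {a : A} {x : X}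
    (h : 0 < T s a x s') : 0 < indT T (s, x) a (s', x) := by
  have hmem : (s', x) ∈ ((T s a x).map fun u => (u, x)).support := by
    rw [PMF.support_map]
    exact ⟨s', (PMF.mem_support_iff _ _).2 h.ne', rfl⟩
  exact pos_iff_ne_zero.mpr ((PMF.mem_support_iff _ _).1 hmem)

/-- The map `f : Runs_X → Runs'` from the runs of a pMDP to the runs of its induced POMDP. -/
def fRun (T : S → A → X → PMF S) (q : RunsX T) : Runs (indT T) :=
  ⟨fSeq q.1.1 q.1.2, fun k => indT_pos (q.2 k)⟩

/-- The map `f` on raw histories: `f(x, s₀·a₀·⋯·s_n) = (s₀,x)·a₀·⋯·(s_n,x)`. -/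
def fHistSeq (x : X) (h : Hist S A) : Hist (S × X) A :=
  (h.1.map fun p => ((p.1, x), p.2), (h.2, x))

theorem isHist_fHistSeq (T : S → A → X → PMF S) (x : X) :
    ∀ (l : List (S × A)) (t : S), IsHist (evalT T x) (l, t) →
      IsHist (indT T) (fHistSeq x (l, t))
  | [], _, _ => trivial
  | (s, a) :: rest, t, hv => by
      obtain ⟨h1, h2⟩ := hv
      have hrec := isHist_fHistSeq T x rest t h2
      refine ⟨?_, hrec⟩
      show 0 < indT T (s, x) a (Hist.first ((rest.map fun p => ((p.1, x), p.2)), (t, x)))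
      have hfirst : Hist.first ((rest.map fun p => ((p.1, x), p.2) : List ((S × X) × A)), (t, x)) =
          (Hist.first (rest, t), x) := by
        cases rest <;> rfl
      rw [hfirst]
      exact indT_pos h1

/-- The map `f : Hist_X → Hist'` from the histories of a pMDP to the histories of
its induced POMDP. -/
def fHistX (T : S → A → X → PMF S) (q : HistX T) : HistOf (indT T) :=
  ⟨fHistSeq q.1.1 q.1.2, isHist_fHistSeq T q.1.1 q.1.2.1 q.1.2.2 q.2⟩

/-- Some run of an MDP: start anywhere, always pick a fixed action, and follow the
support of the transition distributions. -/
noncomputable def someRunSeq (T : S → A → PMF S) (sa : S × A) (a : A) : RunSeq S A :=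
  fun k => Nat.rec sa (fun _ ih => ((PMF.support_nonempty (T ih.1 ih.2)).some, a)) k

theorem someRunSeq_isRun (T : S → A → PMF S) (sa : S × A) (a : A) :
    IsRun T (someRunSeq T sa a) := by
  intro k
  exact pos_iff_ne_zero.mpr <| (PMF.mem_support_iff _ _).1 <|
    (PMF.support_nonempty (T (someRunSeq T sa a k).1 (someRunSeq T sa a k).2)).some_mem

instance instNonemptyRuns [Nonempty S] [Nonempty A] (T : S → A → PMF S) :
    Nonempty (Runs T) :=
  ⟨⟨someRunSeq T (Classical.arbitrary S, Classical.arbitrary A) (Classical.arbitrary A),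
    someRunSeq_isRun _ _ _⟩⟩

instance instNonemptyRunsX [Nonempty S] [Nonempty A] [Nonempty X] (T : S → A → X → PMF S) :
    Nonempty (RunsX T) :=
  ⟨⟨(Classical.arbitrary X,
      someRunSeq (evalT T (Classical.arbitrary X))
        (Classical.arbitrary S, Classical.arbitrary A) (Classical.arbitrary A)),
    someRunSeq_isRun _ _ _⟩⟩

instance instNonemptyHistX [Nonempty S] [Nonempty X] (T : S → A → X → PMF S) :
    Nonempty (HistX T) :=
  ⟨⟨(Classical.arbitrary X, ([], Classical.arbitrary S)), trivial⟩⟩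

instance instNonemptyHistOf [Nonempty S] (T : S → A → PMF S) :
    Nonempty (HistOf T) :=
  ⟨⟨([], Classical.arbitrary S), trivial⟩⟩

/-!
The transition function `T'` of the induced POMDP never changes the parameter component, so
along any run or history of `M'` the parameter is constant. Hence every run (history) of `M'`
is the image under `f` of exactly one run (history) of the pMDP, and the preimage under `f` of
the cone of `f(x, h)` is exactly `{x} × Cone(h)`. Thus `f` is a bijection matching the
generators of `Cones_X` with those of `Cones'`, which gives measurability in both directions.
-/

theorem indT_pos_iff {T : S → A → X → PMF S} {s s' : S} {a : A} {x x' : X} :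
    0 < indT T (s, x) a (s', x') ↔ x' = x ∧ 0 < T s a x s' := by
  simp only [pos_iff_ne_zero, ← PMF.mem_support_iff, indT, PMF.support_map, Set.mem_image,
    Prod.mk.injEq]
  constructor
  · rintro ⟨u, hu, rfl, rfl⟩
    exact ⟨rfl, hu⟩
  · rintro ⟨rfl, hs'⟩
    exact ⟨s', hs', rfl, rfl⟩

theorem IsRun.param_eq_param_zero {T : S → A → X → PMF S} {r : RunSeq (S × X) A}
    (hr : IsRun (indT T) r) (k : ℕ) : (r k).1.2 = (r 0).1.2 := by
  induction k with
  | zero => rfl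
  | succ k ih => exact (indT_pos_iff.1 (hr k)).1.trans ih

theorem fSeq_inj {x y : X} {ρ σ : RunSeq S A} : fSeq x ρ = fSeq y σ ↔ x = y ∧ ρ = σ := by
  constructor
  · intro h
    refine ⟨congrArg (fun r => (r 0).1.2) h, funext fun k => ?_⟩
    have hk := congrFun h k
    simp only [fSeq, Prod.mk.injEq] at hk
    exact Prod.ext hk.1.1 hk.2
  · rintro ⟨rfl, rfl⟩
    rfl

theorem fRun_injective (T : S → A → X → PMF S) : Function.Injective (fRun T) := by
  rintro ⟨⟨x, ρ⟩, hρ⟩ ⟨⟨y, σ⟩, hσ⟩ h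
  obtain ⟨rfl, rfl⟩ := fSeq_inj.1 (congrArg Subtype.val h)
  rfl

theorem fRun_surjective (T : S → A → X → PMF S) : Function.Surjective (fRun T) := by
  rintro ⟨r, hr⟩
  set ρ : RunSeq S A := fun k => ((r k).1.1, (r k).2)
  have hr' : r = fSeq (r 0).1.2 ρ :=
    funext fun k => by simp only [fSeq, ρ, ← hr.param_eq_param_zero k]
  refine ⟨⟨((r 0).1.2, ρ), fun k => ?_⟩, Subtype.ext hr'.symm⟩
  have hk := hr k
  rw [hr'] at hk
  exact (indT_pos_iff.1 hk).2

theorem fRun_bijective (T : S → A → X → PMF S) : Function.Bijective (fRun T) :=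
  ⟨fRun_injective T, fRun_surjective T⟩

theorem Hist.first_fHistSeq (x : X) (h : Hist S A) :
    (fHistSeq x h).first = (h.first, x) := by
  obtain ⟨_ | _, _⟩ := h <;> rfl

theorem fHistX_surjective (T : S → A → X → PMF S) : Function.Surjective (fHistX T) := by
  rintro ⟨⟨l₀, t⟩, hl₀⟩
  suffices ∀ l : List ((S × X) × A), IsHistL (indT T) l t →
      ∃ x h, IsHist (evalT T x) h ∧ (l, t) = fHistSeq x h by
    obtain ⟨x, h, hh, heq⟩ := this l₀ hl₀
    exact ⟨⟨(x, h), hh⟩, Subtype.ext heq.symm⟩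
  intro l hl
  induction l with
  | nil => exact ⟨t.2, ([], t.1), trivial, rfl⟩
  | cons p l ih =>
    obtain ⟨⟨s, y⟩, a⟩ := p
    obtain ⟨x, h, hh, heq⟩ := ih hl.2
    have hstep := hl.1
    rw [show Hist.first (l, t) = (h.first, x) by rw [heq, Hist.first_fHistSeq],
      indT_pos_iff] at hstep
    obtain ⟨rfl, hpos⟩ := hstep
    refine ⟨x, ((s, a) :: h.1, h.2), ⟨hpos, hh⟩, ?_⟩
    obtain ⟨rfl, rfl⟩ := Prod.mk.inj heq
    rfl

theorem fSeq_mem_coneSeq_fHistSeq_iff {x y : X} {ρ : RunSeq S A} {h : Hist S A} :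
    fSeq y ρ ∈ ConeSeq (fHistSeq x h) ↔ y = x ∧ ρ ∈ ConeSeq h := by
  simp only [ConeSeq, Set.mem_ofPred_eq, fSeq, fHistSeq, List.length_map, List.getElem_map,
    Prod.ext_iff]
  constructor
  · rintro ⟨hpre, hlast, rfl⟩
    exact ⟨rfl, fun k hk => ⟨(hpre k hk).1.1, (hpre k hk).2⟩, hlast⟩
  · rintro ⟨rfl, hpre, hlast⟩
    exact ⟨fun k hk => ⟨⟨(hpre k hk).1, rfl⟩, (hpre k hk).2⟩, hlast, rfl⟩

theorem fRun_preimage_cone (T : S → A → X → PMF S) (x : X) (h : Hist S A) :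
    fRun T ⁻¹' Cone (indT T) (fHistSeq x h) = ConeX T x h :=
  Set.ext fun _ => fSeq_mem_coneSeq_fHistSeq_iff

theorem measurable_fRun (T : S → A → X → PMF S) : Measurable (fRun T) := by
  refine measurable_generateFrom ?_
  rintro _ ⟨h', hh', rfl⟩
  obtain ⟨⟨⟨x, h⟩, hh⟩, hx⟩ := fHistX_surjective T ⟨h', hh'⟩
  obtain rfl : fHistSeq x h = h' := congrArg Subtype.val hx
  rw [fRun_preimage_cone]
  exact MeasurableSpace.measurableSet_generateFrom ⟨x, h, hh, rfl⟩

theorem measurable_invFun_fRun [Nonempty S] [Nonempty A] [Nonempty X]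
    (T : S → A → X → PMF S) : Measurable (Function.invFun (fRun T)) := by
  have hbij := fRun_bijective T
  refine measurable_generateFrom ?_
  rintro _ ⟨x, h, hh, rfl⟩
  rw [← Set.image_eq_preimage_of_inverse (Function.leftInverse_invFun hbij.1)
    (Function.rightInverse_invFun hbij.2), ← fRun_preimage_cone, Set.image_preimage_eq _ hbij.2]
  exact MeasurableSpace.measurableSet_generateFrom
    ⟨fHistSeq x h, isHist_fHistSeq T x _ _ hh, rfl⟩

/-- Let `M = (S, A, X, T, i)` be a parametric MDP with induced POMDP `M'`.
The function `f : Runs_X → Runs'` defined by `f(x, s₀·a₀·s₁·⋯) = (s₀,x)·a₀·(s₁,x)·⋯`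
is an isomorphism of measurable spaces between `(Runs_X, Cones_X)` and `(Runs', Cones')`:
`f` is a bijection and both `f` and `f⁻¹` are measurable. -/
theorem runs_measurable_iso [Nonempty S] [Nonempty A] [Nonempty X]
    (T : S → A → X → PMF S) :
    Function.Bijective (fRun T) ∧ Measurable (fRun T) ∧
      Measurable (Function.invFun (fRun T)) :=
  ⟨fRun_bijective T, measurable_fRun T, measurable_invFun_fRun T⟩

end PMDPEncoding
end

section
/- Let M = (S, A, T, i) be an MDP, t ∈ S a state with i(t) = 0, and π any policy for M. Then the probability to reach t in M under π equals the expected undiscounted accumulated reward of π in the MDP with rewards M_t; that is, P^M_{π,i}(Runs_t) = E^{M_t}_{π,i}(r_{R_t}), where Runs_t is the set of runs of M that visit t, and r_{R_t}(s0,a0,s1,a1,…) = Σ_{k≥0} R_t(s_k, a_k, s_{k+1}). -/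
/-!
Call a history *first-hit* if it is nonempty, ends in `t` and visits `t` nowhere else. The runs
of `M` that reach `t` from a start state other than `t` are the disjoint union of the cones of the
first-hit histories, and so are the runs of `M_t` that collect a reward; since `i t = 0`, the runs
starting in `t` are negligible. A first-hit history only uses transitions out of states other
than `t`, so it is a history of `M` iff it is one of `M_t`, with the same cone probability. As `t`
is absorbing in `M_t`, a run of `M_t` collects the reward exactly once if it enters `t` from
outside and never otherwise, so the expected reward is the measure of the union of these cones.
-/

open MeasureTheory ENNReal

namespace PMDPEncoding

universe u v w

variable {S : Type u} {A : Type v} {X : Type w}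

/-- The transition function `T_t` of the MDP with rewards `M_t`: the target `t` is made
absorbing. -/
noncomputable def targetT [DecidableEq S] (T : S → A → PMF S) (t : S) : S → A → PMF S :=
  fun s a => if s = t then PMF.pure t else T s a

theorem exists_first_visit {s : ℕ → S} {t : S} (hreach : ∃ k, s k = t) :
    ∃ n, s n = t ∧ ∀ k < n, s k ≠ t := by
  classical exact ⟨Nat.find hreach, Nat.find_spec hreach, fun k => Nat.find_min hreach⟩

theorem tsum_ite_entry_eq_ite_of_absorbing [DecidableEq S] {s : ℕ → S} {t : S}
    (habs : ∀ k, s k = t → s (k + 1) = t) [Decidable (s 0 ≠ t ∧ ∃ k, s k = t)] :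
    (∑' k, if s k ≠ t ∧ s (k + 1) = t then (1 : ℝ) else 0) =
      if s 0 ≠ t ∧ ∃ k, s k = t then 1 else 0 := by
  have habs_le : ∀ {k m}, k ≤ m → s k = t → s m = t := fun hkm hk => by
    induction hkm with
    | refl => exact hk
    | step _ ih => exact habs _ ih
  split_ifs with hreach
  · obtain ⟨h0, hex⟩ := hreach
    obtain ⟨n, hn, hbefore⟩ := exists_first_visit hex
    obtain ⟨n, rfl⟩ := Nat.exists_eq_succ_of_ne_zero fun hn0 : n = 0 => h0 (hn0 ▸ hn)
    rw [tsum_eq_single n, if_pos ⟨hbefore n n.lt_succ_self, hn⟩]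
    intro k hk
    refine if_neg fun ⟨hkt, hk1⟩ => ?_
    rcases Nat.lt_or_gt_of_ne hk with hlt | hgt
    · exact hbefore (k + 1) (Nat.succ_lt_succ hlt) hk1
    · exact hkt (habs_le hgt hn)
  · have hzero : ∀ k, ¬(s k ≠ t ∧ s (k + 1) = t) := fun k ⟨hkt, hk1⟩ =>
      hreach ⟨fun h0 => hkt (habs_le (Nat.zero_le k) h0), k + 1, hk1⟩
    simp only [hzero, if_false, tsum_zero]

section FirstHit

variable {T : S → A → PMF S} {t : S}

theorem targetT_of_ne [DecidableEq S] {s : S} (hs : s ≠ t) (a : A) :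
    targetT T t s a = T s a :=
  if_neg hs

theorem targetT_succ_eq_of_eq [DecidableEq S] (ρ : Runs (targetT T t)) {k : ℕ}
    (hk : (ρ.1 k).1 = t) : (ρ.1 (k + 1)).1 = t := by
  have hpos := ρ.2 k
  simp only [targetT, hk, if_true] at hpos
  exact (PMF.mem_support_pure_iff _ _).1 ((PMF.mem_support_iff _ _).2 hpos.ne')

theorem isHistL_targetT_iff [DecidableEq S] {u : S} :
    ∀ {l : List (S × A)}, (∀ p ∈ l, p.1 ≠ t) → (IsHistL (targetT T t) l u ↔ IsHistL T l u)
  | [], _ => Iff.rfl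
  | (_, a) :: _, hl =>
    and_congr (by rw [targetT_of_ne (hl _ List.mem_cons_self)])
      (isHistL_targetT_iff fun p hp => hl p (List.mem_cons_of_mem _ hp))

theorem coneProbAux_targetT [DecidableEq S] (π : Hist S A → PMF A) {u : S} :
    ∀ {pre l : List (S × A)}, (∀ p ∈ l, p.1 ≠ t) →
      coneProbAux (targetT T t) π pre l u = coneProbAux T π pre l u
  | _, [], _ => rfl
  | _, (_, a) :: _, hl => by
    simp only [coneProbAux]
    rw [targetT_of_ne (hl _ List.mem_cons_self),
      coneProbAux_targetT π fun p hp => hl p (List.mem_cons_of_mem _ hp)]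

theorem coneProb_targetT [DecidableEq S] (i : PMF S) (π : Hist S A → PMF A) {h : Hist S A}
    (hh : ∀ p ∈ h.1, p.1 ≠ t) : coneProb (targetT T t) i π h = coneProb T i π h :=
  congrArg (i h.first * ·) (coneProbAux_targetT π hh)

def FirstHitHists (T : S → A → PMF S) (t : S) : Set (Hist S A) :=
  {h | h.1 ≠ [] ∧ (∀ p ∈ h.1, p.1 ≠ t) ∧ h.2 = t ∧ IsHist T h}

theorem firstHitHists_targetT [DecidableEq S] :
    FirstHitHists (targetT T t) t = FirstHitHists T t := by
  ext h
  exact and_congr_right fun _ => and_congr_right fun hh => and_congr_right fun _ =>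
    isHistL_targetT_iff hh

theorem Hist.first_ofFn (σ : RunSeq S A) (n : ℕ) :
    Hist.first (List.ofFn (fun j : Fin n => σ j), (σ n).1) = (σ 0).1 := by
  cases n with
  | zero => rfl
  | succ n => rw [List.ofFn_succ]; rfl

theorem isHist_ofFn (n : ℕ) (ρ : Runs T) :
    IsHist T (List.ofFn (fun j : Fin n => ρ.1 j), (ρ.1 n).1) := by
  induction n generalizing ρ with
  | zero => trivial
  | succ n ih =>
    rw [List.ofFn_succ]
    refine ⟨?_, ih ⟨fun k => ρ.1 (k + 1), fun k => ρ.2 (k + 1)⟩⟩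
    simpa using Hist.first_ofFn (fun k => ρ.1 (k + 1)) n ▸ ρ.2 0

theorem exists_firstHitHists_mem_cone (ρ : Runs T) (h0 : (ρ.1 0).1 ≠ t)
    (hreach : ∃ k, (ρ.1 k).1 = t) : ∃ h ∈ FirstHitHists T t, ρ ∈ Cone T h := by
  obtain ⟨n, hn, hbefore⟩ := exists_first_visit hreach
  refine ⟨(List.ofFn fun j : Fin n => ρ.1 j, t), ⟨?_, ?_, rfl, ?_⟩, ?_, ?_⟩
  · simpa using fun hzero : n = 0 => h0 (hzero ▸ hn)
  · simpa only [List.mem_ofFn, forall_exists_index, forall_apply_eq_imp_iff] using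
      fun j : Fin n => hbefore j j.2
  · rw [← hn]
    exact isHist_ofFn n ρ
  · simp
  · simpa using hn

theorem start_ne_of_mem_cone {h : Hist S A} (hh : h ∈ FirstHitHists T t) {ρ : Runs T}
    (hρ : ρ ∈ Cone T h) : (ρ.1 0).1 ≠ t := by
  obtain ⟨hne, havoid, -⟩ := hh
  rw [hρ.1 0 (List.length_pos_iff.2 hne)]
  exact havoid _ (List.getElem_mem _)

theorem reach_of_mem_cone {h : Hist S A} (hh : h ∈ FirstHitHists T t) {ρ : Runs T}
    (hρ : ρ ∈ Cone T h) : ∃ k, (ρ.1 k).1 = t :=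
  ⟨h.1.length, hρ.2.trans hh.2.2.1⟩

theorem biUnion_cone_firstHitHists :
    ⋃ h ∈ FirstHitHists T t, Cone T h = {ρ : Runs T | (ρ.1 0).1 ≠ t ∧ ∃ k, (ρ.1 k).1 = t} := by
  ext ρ
  simp only [Set.mem_iUnion, Set.mem_ofPred_eq, exists_prop]
  constructor
  · rintro ⟨h, hh, hρ⟩
    exact ⟨start_ne_of_mem_cone hh hρ, reach_of_mem_cone hh hρ⟩
  · rintro ⟨h0, hreach⟩
    exact exists_firstHitHists_mem_cone ρ h0 hreach

theorem length_le_of_mem_coneSeq {h h' : Hist S A} (hh : h ∈ FirstHitHists T t)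
    (hh' : h' ∈ FirstHitHists T t) {σ : RunSeq S A} (hσ : σ ∈ ConeSeq h)
    (hσ' : σ ∈ ConeSeq h') : h.1.length ≤ h'.1.length := by
  by_contra! hlt
  have hvisit : (σ h'.1.length).1 = t := hσ'.2.trans hh'.2.2.1
  rw [hσ.1 _ hlt] at hvisit
  exact hh.2.1 _ (List.getElem_mem _) hvisit

theorem firstHitHists_pairwiseDisjoint : (FirstHitHists T t).PairwiseDisjoint (Cone T) := by
  intro h hh h' hh' hne
  refine Set.disjoint_left.2 fun ρ hρ hρ' => hne ?_
  have hlen := (length_le_of_mem_coneSeq hh hh' hρ hρ').antisymm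
    (length_le_of_mem_coneSeq hh' hh hρ' hρ)
  refine Prod.ext (List.ext_getElem hlen fun k hk hk' => ?_) (hh.2.2.1.trans hh'.2.2.1.symm)
  rw [← hρ.1 k hk, ← hρ'.1 k hk']

theorem measurableSet_cone {h : Hist S A} (hh : IsHist T h) : MeasurableSet (Cone T h) :=
  MeasurableSpace.measurableSet_generateFrom ⟨h, hh, rfl⟩

variable [Countable S] [Countable A]

theorem measurableSet_reach_from_outside :
    MeasurableSet {ρ : Runs T | (ρ.1 0).1 ≠ t ∧ ∃ k, (ρ.1 k).1 = t} :=
  biUnion_cone_firstHitHists ▸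
    .biUnion (Set.to_countable _) fun _ hh => measurableSet_cone hh.2.2.2

theorem measure_reach_from_outside_eq_tsum {i : PMF S} {π : Hist S A → PMF A}
    {μ : Measure (Runs T)}
    (hμ : ∀ h : Hist S A, IsHist T h → μ (Cone T h) = coneProb T i π h) :
    μ {ρ : Runs T | (ρ.1 0).1 ≠ t ∧ ∃ k, (ρ.1 k).1 = t} =
      ∑' h : FirstHitHists T t, coneProb T i π h := by
  rw [← biUnion_cone_firstHitHists, measure_biUnion (Set.to_countable _)
    firstHitHists_pairwiseDisjoint fun _ hh => measurableSet_cone hh.2.2.2]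
  exact tsum_congr fun h => hμ h h.2.2.2.2

end FirstHit

theorem measure_reach_eq_measure_reach_from_outside {T : S → A → PMF S} {t : S} {i : PMF S}
    (hit : i t = 0) {π : Hist S A → PMF A} {μ : Measure (Runs T)}
    (hμ : μ (Cone T ([], t)) = coneProb T i π ([], t)) :
    μ {ρ : Runs T | ∃ k, (ρ.1 k).1 = t} =
      μ {ρ : Runs T | (ρ.1 0).1 ≠ t ∧ ∃ k, (ρ.1 k).1 = t} := by
  have hsplit : {ρ : Runs T | ∃ k, (ρ.1 k).1 = t} =
      Cone T ([], t) ∪ {ρ : Runs T | (ρ.1 0).1 ≠ t ∧ ∃ k, (ρ.1 k).1 = t} := by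
    ext ρ
    by_cases h0 : (ρ.1 0).1 = t
    · simpa [Cone, ConeSeq, h0] using ⟨0, h0⟩
    · simp [Cone, ConeSeq, h0]
  have hstart : μ (Cone T ([], t)) = 0 := by simp [hμ, coneProb, coneProbAux, Hist.first, hit]
  rw [hsplit]
  exact measure_congr (union_ae_eq_right_of_ae_eq_empty (ae_eq_empty.2 hstart))

theorem reach_prob_eq_expected_reward_general [Countable S] [Countable A] [DecidableEq S]
    (T : S → A → PMF S) (i : PMF S) (t : S) (hit : i t = 0)
    (π : Hist S A → PMF A)
    (P : Measure (Runs T))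
    (hP : ∀ h : Hist S A, IsHist T h → P (Cone T h) = coneProb T i π h)
    (Q : Measure (Runs (targetT T t)))
    (hQ : ∀ h : Hist S A, IsHist (targetT T t) h →
      Q (Cone (targetT T t) h) = coneProb (targetT T t) i π h) :
    (P {ρ : Runs T | ∃ k, (ρ.1 k).1 = t}).toReal =
      ∫ ρ, (∑' k : ℕ, if (ρ.1 k).1 ≠ t ∧ (ρ.1 (k + 1)).1 = t then (1 : ℝ) else 0) ∂Q := by
  have hreward : (fun ρ : Runs (targetT T t) =>
      ∑' k : ℕ, if (ρ.1 k).1 ≠ t ∧ (ρ.1 (k + 1)).1 = t then (1 : ℝ) else 0) =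
      {ρ | (ρ.1 0).1 ≠ t ∧ ∃ k, (ρ.1 k).1 = t}.indicator 1 := by
    funext ρ
    classical
    rw [Set.indicator_apply]
    exact tsum_ite_entry_eq_ite_of_absorbing (s := fun k => (ρ.1 k).1) fun _ =>
      targetT_succ_eq_of_eq ρ
  rw [hreward, integral_indicator_one measurableSet_reach_from_outside, measureReal_def,
    measure_reach_eq_measure_reach_from_outside hit (hP _ trivial),
    measure_reach_from_outside_eq_tsum hP, measure_reach_from_outside_eq_tsum hQ,
    firstHitHists_targetT]
  exact congrArg _ (tsum_congr fun h => (coneProb_targetT i π h.2.2.1).symm)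

/-- Let `M = (S, A, T, i)` be an MDP, `t ∈ S` a state with `i(t) = 0`,
and `π` any policy for `M`. Then the probability to reach `t` in `M` under `π` equals the
expected undiscounted accumulated reward of `π` in the MDP with rewards `M_t`:
`P^M_{π,i}(Runs_t) = E^{M_t}_{π,i}(r_{R_t})`, where
`r_{R_t}(s₀,a₀,s₁,a₁,…) = Σ_{k≥0} R_t(s_k, a_k, s_{k+1})` and `R_t(s,a,s') = 1` iff
`s ≠ t` and `s' = t`. -/
theorem reach_prob_eq_expected_reward [Countable S] [Countable A] [DecidableEq S]
    (T : S → A → PMF S) (i : PMF S) (t : S) (hit : i t = 0)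
    (π : Hist S A → PMF A)
    (P : Measure (Runs T)) [IsProbabilityMeasure P]
    (hP : ∀ h : Hist S A, IsHist T h → P (Cone T h) = coneProb T i π h)
    (Q : Measure (Runs (targetT T t))) [IsProbabilityMeasure Q]
    (hQ : ∀ h : Hist S A, IsHist (targetT T t) h →
      Q (Cone (targetT T t) h) = coneProb (targetT T t) i π h) :
    (P {ρ : Runs T | ∃ k, (ρ.1 k).1 = t}).toReal =
      ∫ ρ, (∑' k : ℕ, if (ρ.1 k).1 ≠ t ∧ (ρ.1 (k + 1)).1 = t then (1 : ℝ) else 0) ∂Q :=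
  reach_prob_eq_expected_reward_general T i t hit π P hP Q hQ

end PMDPEncoding
end
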